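/- If G is a connected bipartite graph with bipartition (A,B) and the intersection graph of a grid, 1 ≤ |A| ≤ |B|, and γ(G) = |A|, then for every b ∈ B, the number of neighbors of b that are neither leaves nor support vertices is at most 4. -/

import Mathlib

/-!
Swapping coordinates, we may assume that `b` is horizontal, so that `A` is the set of vertical
segments: a vertex cover with `|A| = γ(G)`. If two non-support neighbours `u₁, u₂` of `b` had no
common neighbour `w ≠ b` with `N(w) = {u₁, u₂}`, replacing `u₁, u₂` by `b` in `A` would give a
smaller dominating set. So if `b` had five non-support neighbours `u₀, …, u₄`, ordered from left
to right, every pair `uᵢ, uⱼ` would be joined by a horizontal segment, at another height than `b`,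
that misses each `uₖ` with `i < k < j`. Depending on whether it runs above or below `b`, all these
`uₖ` end strictly lower than both `uᵢ` and `uⱼ`, or start strictly higher than both; and no five
segments allow this for every pair.
-/

open Finset

variable {V : Type} [Fintype V] [DecidableEq V]

def IsDomSet (G : SimpleGraph V) (D : Finset V) : Prop :=
  ∀ v : V, v ∉ D → ∃ u ∈ D, G.Adj u v

noncomputable def domNum (G : SimpleGraph V) : ℕ :=
  sInf {n | ∃ D : Finset V, IsDomSet G D ∧ D.card = n}

def IsVertexCover (G : SimpleGraph V) (C : Finset V) : Prop :=
  ∀ ⦃u v : V⦄, G.Adj u v → u ∈ C ∨ v ∈ C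

noncomputable def coverNum (G : SimpleGraph V) : ℕ :=
  sInf {n | ∃ C : Finset V, IsVertexCover G C ∧ C.card = n}

def IsIndepFinset (G : SimpleGraph V) (I : Finset V) : Prop :=
  ∀ u ∈ I, ∀ v ∈ I, ¬ G.Adj u v

noncomputable def indepNum (G : SimpleGraph V) : ℕ :=
  sSup {n | ∃ I : Finset V, IsIndepFinset G I ∧ I.card = n}

def IsLeaf (G : SimpleGraph V) [DecidableRel G.Adj] (v : V) : Prop :=
  G.degree v = 1

def IsSupport (G : SimpleGraph V) [DecidableRel G.Adj] (v : V) : Prop :=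
  ∃ u, G.Adj v u ∧ IsLeaf G u

def IsWeakSupport (G : SimpleGraph V) [DecidableRel G.Adj] (v : V) : Prop :=
  ((G.neighborFinset v).filter fun l => G.degree l = 1).card = 1

def IsBipartition (G : SimpleGraph V) (A B : Finset V) : Prop :=
  A ∪ B = Finset.univ ∧ Disjoint A B ∧
    ∀ ⦃u v : V⦄, G.Adj u v → (u ∈ A ∧ v ∈ B) ∨ (u ∈ B ∧ v ∈ A)

/-- An axis-parallel nondegenerate closed line segment in the plane. -/
structure GridSeg where
  a : ℝ × ℝ
  b : ℝ × ℝ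
  ne : a ≠ b
  aligned : a.1 = b.1 ∨ a.2 = b.2

/-- The set of points of a segment. -/
def GridSeg.toSet (s : GridSeg) : Set (ℝ × ℝ) := segment ℝ s.a s.b

def GridSeg.Vertical (s : GridSeg) : Prop := s.a.1 = s.b.1

def GridSeg.Horizontal (s : GridSeg) : Prop := s.a.2 = s.b.2

/-- A family of segments is a grid if the segments are distinct (as point sets),
there are at least two of them, collinear segments are disjoint,
and the union of all segments is a connected subset of the plane. -/
def IsGrid {ι : Type} [Fintype ι] (f : ι → GridSeg) : Prop :=
  (∀ i j, (f i).toSet = (f j).toSet → i = j) ∧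
  2 ≤ Fintype.card ι ∧
  (∀ i j, i ≠ j → Collinear ℝ ((f i).toSet ∪ (f j).toSet) →
    Disjoint (f i).toSet (f j).toSet) ∧
  IsConnected (⋃ i, (f i).toSet)

/-- The intersection graph of a family of segments. -/
def gridGraph {ι : Type} (f : ι → GridSeg) : SimpleGraph ι where
  Adj i j := i ≠ j ∧ ((f i).toSet ∩ (f j).toSet).Nonempty
  symm := by
    constructor
    intro i j h
    exact ⟨h.1.symm, by rw [Set.inter_comm]; exact h.2⟩
  loopless := by
    constructor
    intro i h
    exact h.1 rfl

theorem domNum_le_card {α : Type} {G : SimpleGraph α} {D : Finset α} (hD : IsDomSet G D) :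
    domNum G ≤ D.card :=
  Nat.sInf_le ⟨D, hD, rfl⟩

/-- Otherwise `insert b (A \ {u₁, u₂})` would dominate `G` with fewer than `A.card` vertices:
a vertex outside it and outside `A` has all its neighbours in `{u₁, u₂}` and is not a leaf. -/
theorem exists_neighborSet_eq_pair_of_domNum_eq_card {α : Type} [DecidableEq α]
    {G : SimpleGraph α} {A : Finset α}
    (hA : IsVertexCover G A) (hdom : domNum G = A.card) (hG : ∀ v, ∃ u, G.Adj v u)
    {b u₁ u₂ : α} (hu₁ : u₁ ∈ A) (hu₂ : u₂ ∈ A) (hu : u₁ ≠ u₂)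
    (hbu₁ : G.Adj b u₁) (hbu₂ : G.Adj b u₂)
    (hs₁ : ¬ ∃ w, G.Adj u₁ w ∧ (G.neighborSet w).ncard = 1)
    (hs₂ : ¬ ∃ w, G.Adj u₂ w ∧ (G.neighborSet w).ncard = 1) :
    ∃ w ≠ b, G.neighborSet w = {u₁, u₂} := by
  by_contra! hno
  set D := insert b ((A.erase u₁).erase u₂)
  have hD : IsDomSet G D := by
    intro v hvD
    have hvb : v ≠ b := fun h => hvD (h ▸ mem_insert_self _ _)
    by_cases hvA : v ∈ A
    · have : v = u₁ ∨ v = u₂ := by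
        simp only [D, mem_insert, mem_erase] at hvD
        tauto
      rcases this with rfl | rfl
      · exact ⟨b, mem_insert_self _ _, hbu₁⟩
      · exact ⟨b, mem_insert_self _ _, hbu₂⟩
    by_contra! hund
    have hsub : G.neighborSet v ⊆ {u₁, u₂} := by
      intro z hz
      have hzA : z ∈ A := (hA hz).resolve_left hvA
      have hzD : z ∉ D := fun h => hund z h hz.symm
      simp only [D, mem_insert, mem_erase] at hzD
      simp only [Set.mem_insert_iff, Set.mem_singleton_iff]
      tauto
    obtain ⟨z, hz⟩ := hG v
    have hleaf {u : α} (h : G.neighborSet v = {u}) : G.Adj u v ∧ (G.neighborSet v).ncard = 1 :=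
      ⟨(show u ∈ G.neighborSet v from h ▸ rfl).symm, by rw [h, Set.ncard_singleton]⟩
    rcases (Set.Nonempty.subset_pair_iff_eq (s := G.neighborSet v) ⟨z, hz⟩).1 hsub with h | h | h
    · exact hs₁ ⟨v, hleaf h⟩
    · exact hs₂ ⟨v, hleaf h⟩
    · exact hno v hvb h
  have hcard : D.card < A.card := by
    have hD : D.card ≤ ((A.erase u₁).erase u₂).card + 1 := card_insert_le _ _
    rw [card_erase_of_mem (mem_erase.2 ⟨hu.symm, hu₂⟩), card_erase_of_mem hu₁] at hD
    have : 2 ≤ A.card := one_lt_card.2 ⟨u₁, hu₁, u₂, hu₂, hu⟩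
    omega
  exact hcard.not_ge (hdom ▸ domNum_le_card hD)

theorem exists_strictMono_comp_of_le_ncard {ι α : Type*} [LinearOrder α] {S : Set ι}
    (hS : S.Finite) {g : ι → α} (hg : S.InjOn g) {n : ℕ} (hn : n ≤ S.ncard) :
    ∃ u : Fin n → ι, (∀ m, u m ∈ S) ∧ StrictMono (g ∘ u) := by
  have hT := hS.image g
  have hcard : n ≤ hT.toFinset.card := by
    rwa [← Set.ncard_eq_toFinset_card _ hT, hg.ncard_image]
  set e := hT.toFinset.orderEmbOfFin rfl
  have hmem (m : Fin n) : ∃ i ∈ S, g i = e (Fin.castLE hcard m) := by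
    have := hT.toFinset.orderEmbOfFin_mem rfl (Fin.castLE hcard m)
    rwa [Set.Finite.mem_toFinset, Set.mem_image] at this
  choose u hu hgu using hmem
  refine ⟨u, hu, fun m m' h => ?_⟩
  simp only [Function.comp_apply, hgu]
  exact e.strictMono ((Fin.castLE_lt_castLE_iff hcard).2 h)

def DipsBetween {α : Type*} [LT α] {n : ℕ} (h : Fin n → α) (i j : Fin n) : Prop :=
  ∀ k, i < k → k < j → h k < h i ∧ h k < h j

/-- The pairs `(0, 2)`, `(1, 3)`, `(2, 4)` force `1, 2, 3` to be alternately dips of `h` and of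
`l`; either way the pairs `(0, 3)` and `(1, 4)` then contradict each other. -/
theorem not_forall_dipsBetween_or_dipsBetween {α β : Type*} [LinearOrder α] [LinearOrder β]
    (h : Fin 5 → α) (l : Fin 5 → β) :
    ¬ ∀ i j, i < j → DipsBetween h i j ∨ DipsBetween l i j := by
  intro hdip
  rcases hdip 0 2 (by decide) with H02 | H02 <;> rcases hdip 0 3 (by decide) with H03 | H03 <;>
    rcases hdip 1 3 (by decide) with H13 | H13 <;> rcases hdip 1 4 (by decide) with H14 | H14 <;>
    rcases hdip 2 4 (by decide) with H24 | H24 <;>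
  · have := H02 1 (by decide) (by decide)
    have := H03 1 (by decide) (by decide)
    have := H03 2 (by decide) (by decide)
    have := H13 2 (by decide) (by decide)
    have := H14 2 (by decide) (by decide)
    have := H14 3 (by decide) (by decide)
    have := H24 3 (by decide) (by decide)
    order

namespace GridSeg

def swap (s : GridSeg) : GridSeg where
  a := s.a.swap
  b := s.b.swap
  ne := fun h => s.ne (Prod.swap_injective h)
  aligned := s.aligned.symm

theorem toSet_swap (s : GridSeg) : s.swap.toSet = Prod.swap '' s.toSet :=
  (image_segment ℝ (LinearEquiv.prodComm ℝ ℝ ℝ).toLinearMap.toAffineMap s.a s.b).symm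

theorem vertical_swap {s : GridSeg} : s.swap.Vertical ↔ s.Horizontal := Iff.rfl

def bot (s : GridSeg) : ℝ := s.a.2 ⊓ s.b.2

def top (s : GridSeg) : ℝ := s.a.2 ⊔ s.b.2

theorem mem_uIcc_iff {s : GridSeg} {y : ℝ} : y ∈ Set.uIcc s.a.2 s.b.2 ↔ s.bot ≤ y ∧ y ≤ s.top :=
  Iff.rfl

theorem mem_toSet_of_vertical {s : GridSeg} (hs : s.Vertical) {p : ℝ × ℝ} :
    p ∈ s.toSet ↔ p.1 = s.a.1 ∧ p.2 ∈ Set.uIcc s.a.2 s.b.2 := by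
  have hline : s.toSet = (fun y => (s.a.1, y)) '' Set.uIcc s.a.2 s.b.2 := by
    rw [← segment_eq_uIcc, Prod.image_mk_segment_right, GridSeg.toSet]
    congr 1
    exact Prod.ext hs.symm rfl
  rw [hline]
  constructor
  · rintro ⟨y, hy, rfl⟩
    exact ⟨rfl, hy⟩
  · rintro ⟨h1, h2⟩
    exact ⟨p.2, h2, Prod.ext h1.symm rfl⟩

theorem mem_toSet_of_horizontal {s : GridSeg} (hs : s.Horizontal) {p : ℝ × ℝ} :
    p ∈ s.toSet ↔ p.2 = s.a.2 ∧ p.1 ∈ Set.uIcc s.a.1 s.b.1 := by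
  rw [← Prod.swap_injective.mem_set_image, ← toSet_swap]
  exact mem_toSet_of_vertical (vertical_swap.2 hs)

end GridSeg

theorem collinear_of_image_swap {S : Set (ℝ × ℝ)} (h : Collinear ℝ (Prod.swap '' S)) :
    Collinear ℝ S := by
  unfold Collinear at *
  rw [show Prod.swap '' S = (LinearEquiv.prodComm ℝ ℝ ℝ).toLinearMap.toAffineMap '' S from rfl,
    ← AffineMap.map_vectorSpan, LinearMap.toAffineMap_linear, LinearEquiv.rank_map_eq] at h
  exact h

theorem collinear_of_vertical {s t : GridSeg} (hs : s.Vertical) (ht : t.Vertical)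
    (hst : s.a.1 = t.a.1) : Collinear ℝ (s.toSet ∪ t.toSet) := by
  rw [collinear_iff_exists_forall_eq_smul_vadd]
  refine ⟨(s.a.1, 0), (0, 1), ?_⟩
  rintro p (hp | hp)
  · rw [GridSeg.mem_toSet_of_vertical hs] at hp
    exact ⟨p.2, by simp [Prod.ext_iff, hp.1]⟩
  · rw [GridSeg.mem_toSet_of_vertical ht] at hp
    exact ⟨p.2, by simp [Prod.ext_iff, hp.1, hst]⟩

section Grid

variable {ι : Type} (f : ι → GridSeg)

theorem gridGraph_swap : gridGraph (fun i => (f i).swap) = gridGraph f := by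
  ext i j
  simp only [gridGraph, GridSeg.toSet_swap, ← Set.image_inter Prod.swap_injective,
    Set.image_nonempty]

variable {f}

theorem IsGrid.swap [Fintype ι] (hgrid : IsGrid f) : IsGrid (fun i => (f i).swap) := by
  obtain ⟨hinj, hcard, hcol, hconn⟩ := hgrid
  refine ⟨fun i j h => ?_, hcard, fun i j hij h => ?_, ?_⟩
  · simp only [GridSeg.toSet_swap] at h
    exact hinj i j (Set.image_injective.mpr Prod.swap_injective h)
  · simp only [GridSeg.toSet_swap, ← Set.image_union] at h ⊢
    exact (Set.disjoint_image_iff Prod.swap_injective).2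
      (hcol i j hij (collinear_of_image_swap h))
  · simp only [GridSeg.toSet_swap, ← Set.image_iUnion]
    exact hconn.image _ continuous_swap.continuousOn

theorem IsGrid.not_adj_of_vertical [Fintype ι] (hgrid : IsGrid f) {i j : ι}
    (hi : (f i).Vertical) (hj : (f j).Vertical) : ¬ (gridGraph f).Adj i j := by
  rintro ⟨hij, p, hpi, hpj⟩
  have hx : (f i).a.1 = (f j).a.1 :=
    ((GridSeg.mem_toSet_of_vertical hi).1 hpi).1.symm.trans
      ((GridSeg.mem_toSet_of_vertical hj).1 hpj).1
  exact Set.disjoint_left.1 (hgrid.2.2.1 i j hij (collinear_of_vertical hi hj hx)) hpi hpj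

theorem IsGrid.not_adj_of_horizontal [Fintype ι] (hgrid : IsGrid f) {i j : ι}
    (hi : (f i).Horizontal) (hj : (f j).Horizontal) : ¬ (gridGraph f).Adj i j := by
  rw [← gridGraph_swap f]
  exact hgrid.swap.not_adj_of_vertical hi hj

theorem IsGrid.isVertexCover [Fintype ι] [DecidableEq ι] (hgrid : IsGrid f) {A : Finset ι}
    (hA : ∀ i, i ∈ A ↔ (f i).Vertical) : IsVertexCover (gridGraph f) A := by
  intro i j hij
  rw [hA, hA]
  rcases (f i).aligned with hi | hi
  · exact Or.inl hi
  rcases (f j).aligned with hj | hj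
  · exact Or.inr hj
  exact absurd hij (hgrid.not_adj_of_horizontal hi hj)

theorem gridGraph_adj_iff {i j : ι} (hi : (f i).Vertical) (hj : (f j).Horizontal) :
    (gridGraph f).Adj i j ↔
      (f i).a.1 ∈ Set.uIcc (f j).a.1 (f j).b.1 ∧ (f j).a.2 ∈ Set.uIcc (f i).a.2 (f i).b.2 := by
  have hij : i ≠ j := fun h => (f i).ne (Prod.ext hi (h ▸ hj))
  simp only [gridGraph, ne_eq, hij, not_false_eq_true, true_and, Set.Nonempty,
    Set.mem_inter_iff, GridSeg.mem_toSet_of_vertical hi, GridSeg.mem_toSet_of_horizontal hj]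
  constructor
  · rintro ⟨p, ⟨hp₁, hpi⟩, hp₂, hpj⟩
    exact ⟨hp₁ ▸ hpj, hp₂ ▸ hpi⟩
  · rintro ⟨hx, hy⟩
    exact ⟨((f i).a.1, (f j).a.2), ⟨rfl, hy⟩, rfl, hx⟩

theorem IsGrid.forall_top_lt_or_forall_lt_bot [Fintype ι] (hgrid : IsGrid f) {b w v₁ v₂ : ι}
    (hb : (f b).Horizontal) (hw : (f w).Horizontal) (hwb : w ≠ b)
    (hv₁ : (f v₁).Vertical) (hv₂ : (f v₂).Vertical)
    (hv₁b : (gridGraph f).Adj v₁ b) (hv₁w : (gridGraph f).Adj v₁ w)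
    (hv₂w : (gridGraph f).Adj v₂ w) :
    (∀ v, (f v).Vertical → (gridGraph f).Adj v b → ¬ (gridGraph f).Adj v w →
        (f v).a.1 ∈ Set.uIcc (f v₁).a.1 (f v₂).a.1 →
          (f v).top < (f v₁).top ∧ (f v).top < (f v₂).top) ∨
      (∀ v, (f v).Vertical → (gridGraph f).Adj v b → ¬ (gridGraph f).Adj v w →
        (f v).a.1 ∈ Set.uIcc (f v₁).a.1 (f v₂).a.1 →
          (f v₁).bot < (f v).bot ∧ (f v₂).bot < (f v).bot) := by
  obtain ⟨hx₁, hy₁⟩ := (gridGraph_adj_iff hv₁ hw).1 hv₁w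
  obtain ⟨hx₂, hy₂⟩ := (gridGraph_adj_iff hv₂ hw).1 hv₂w
  rw [GridSeg.mem_uIcc_iff] at hy₁ hy₂
  -- `w` crosses the vertical line of every such `v`, so it has to pass above or below `v`
  have hmiss {v : ι} (hv : (f v).Vertical) (hvb : (gridGraph f).Adj v b)
      (hvw : ¬ (gridGraph f).Adj v w) (hvx : (f v).a.1 ∈ Set.uIcc (f v₁).a.1 (f v₂).a.1) :
      ((f v).bot ≤ (f b).a.2 ∧ (f b).a.2 ≤ (f v).top) ∧
        ((f w).a.2 < (f v).bot ∨ (f v).top < (f w).a.2) := by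
    rw [← GridSeg.mem_uIcc_iff, ← not_le, ← not_le, ← not_and_or, ← GridSeg.mem_uIcc_iff]
    refine ⟨((gridGraph_adj_iff hv hb).1 hvb).2, fun hy => hvw ?_⟩
    exact (gridGraph_adj_iff hv hw).2 ⟨Set.uIcc_subset_uIcc hx₁ hx₂ hvx, hy⟩
  have hwb_y : (f w).a.2 ≠ (f b).a.2 := by
    intro hy
    refine hgrid.not_adj_of_horizontal hw hb ⟨hwb, ((f v₁).a.1, (f w).a.2), ?_, ?_⟩
    · exact (GridSeg.mem_toSet_of_horizontal hw).2 ⟨rfl, hx₁⟩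
    · exact (GridSeg.mem_toSet_of_horizontal hb).2
        ⟨hy, ((gridGraph_adj_iff hv₁ hb).1 hv₁b).1⟩
  rcases hwb_y.lt_or_gt with hlt | hgt
  · refine Or.inr fun v hv hvb hvw hvx => ?_
    rcases hmiss hv hvb hvw hvx with ⟨⟨h₁, h₂⟩, h₃ | h₃⟩ <;> constructor <;> order
  · refine Or.inl fun v hv hvb hvw hvx => ?_
    rcases hmiss hv hvb hvw hvx with ⟨⟨h₁, h₂⟩, h₃ | h₃⟩ <;> constructor <;> order

theorem IsGrid.vertical_of_adj_of_horizontal [Fintype ι] (hgrid : IsGrid f) {i j : ι}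
    (hi : (f i).Horizontal) (hij : (gridGraph f).Adj i j) : (f j).Vertical :=
  (f j).aligned.resolve_right fun hj => hgrid.not_adj_of_horizontal hi hj hij

theorem IsGrid.horizontal_of_adj_of_vertical [Fintype ι] (hgrid : IsGrid f) {i j : ι}
    (hi : (f i).Vertical) (hij : (gridGraph f).Adj i j) : (f j).Horizontal :=
  (f j).aligned.resolve_left fun hj => hgrid.not_adj_of_vertical hi hj hij

theorem IsGrid.injOn_fst_neighborSet [Fintype ι] (hgrid : IsGrid f) {b : ι}
    (hb : (f b).Horizontal) : ((gridGraph f).neighborSet b).InjOn fun i => (f i).a.1 := by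
  intro i hi j hj hx
  by_contra hij
  have hiV := hgrid.vertical_of_adj_of_horizontal hb hi
  have hjV := hgrid.vertical_of_adj_of_horizontal hb hj
  refine hgrid.not_adj_of_vertical hiV hjV ⟨hij, ((f i).a.1, (f b).a.2), ?_, ?_⟩
  · exact (GridSeg.mem_toSet_of_vertical hiV).2 ⟨rfl, ((gridGraph_adj_iff hiV hb).1 hi.symm).2⟩
  · exact (GridSeg.mem_toSet_of_vertical hjV).2
      ⟨hx, ((gridGraph_adj_iff hjV hb).1 hj.symm).2⟩

end Grid

theorem IsGrid.ncard_nonsupport_neighborSet_le_four {ι : Type} [Fintype ι] {f : ι → GridSeg}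
    (hgrid : IsGrid f) (hconn : (gridGraph f).Connected)
    (hdom : domNum (gridGraph f) = {i | (f i).Vertical}.ncard) {b : ι} (hb : (f b).Horizontal) :
    {u | (gridGraph f).Adj b u ∧
        ¬ ∃ w, (gridGraph f).Adj u w ∧ ((gridGraph f).neighborSet w).ncard = 1}.ncard ≤ 4 := by
  classical
  set G := gridGraph f
  set A := univ.filter fun i => (f i).Vertical
  have hA (i : ι) : i ∈ A ↔ (f i).Vertical := by simp [A]
  have hdomA : domNum G = A.card := by
    rw [hdom, ← Set.ncard_coe_finset, coe_filter_univ]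
  have : Nontrivial ι := Fintype.one_lt_card_iff_nontrivial.1 hgrid.2.1
  by_contra h5
  rw [not_le] at h5
  obtain ⟨u, hu, hmono⟩ := exists_strictMono_comp_of_le_ncard (n := 5) (Set.toFinite _)
    ((hgrid.injOn_fst_neighborSet hb).mono fun _ h => h.1) h5
  have hu_inj : Function.Injective u := hmono.injective.of_comp
  have hV (m : Fin 5) : (f (u m)).Vertical := hgrid.vertical_of_adj_of_horizontal hb (hu m).1
  refine not_forall_dipsBetween_or_dipsBetween (fun m => (f (u m)).top)
    (fun m => OrderDual.toDual (f (u m)).bot : Fin 5 → ℝᵒᵈ) fun m n hmn => ?_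
  obtain ⟨w, hwb, hw⟩ := exists_neighborSet_eq_pair_of_domNum_eq_card
    (hgrid.isVertexCover hA) hdomA hconn.preconnected.exists_adj_of_nontrivial
    ((hA _).2 (hV m)) ((hA _).2 (hV n)) (hu_inj.ne hmn.ne) (hu m).1 (hu n).1
    (hu m).2 (hu n).2
  have hadj (k : Fin 5) : G.Adj (u k) w ↔ k = m ∨ k = n := by
    rw [G.adj_comm, ← G.mem_neighborSet, hw, Set.mem_insert_iff, Set.mem_singleton_iff,
      hu_inj.eq_iff, hu_inj.eq_iff]
  have hwH : (f w).Horizontal :=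
    hgrid.horizontal_of_adj_of_vertical (hV m) ((hadj m).2 (Or.inl rfl))
  have hbetween {k : Fin 5} (hmk : m < k) (hkn : k < n) :
      (f (u k)).a.1 ∈ Set.uIcc (f (u m)).a.1 (f (u n)).a.1 ∧ ¬ G.Adj (u k) w :=
    ⟨Set.Icc_subset_uIcc ⟨(hmono hmk).le, (hmono hkn).le⟩,
      fun h => ((hadj k).1 h).elim hmk.ne' hkn.ne⟩
  refine (hgrid.forall_top_lt_or_forall_lt_bot hb hwH hwb (hV m) (hV n) (hu m).1.symm
    ((hadj m).2 (Or.inl rfl)) ((hadj n).2 (Or.inr rfl))).imp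
      (fun H k hmk hkn => H _ (hV k) (hu k).1.symm (hbetween hmk hkn).2 (hbetween hmk hkn).1)
      (fun H k hmk hkn => (H _ (hV k) (hu k).1.symm (hbetween hmk hkn).2
        (hbetween hmk hkn).1).imp OrderDual.toDual_lt_toDual.2 OrderDual.toDual_lt_toDual.2)

theorem grid_nonleaf_nonsupport_neighbors_le_four_general {ι : Type} [Fintype ι]
    (f : ι → GridSeg) (hgrid : IsGrid f) (A B : Set ι)
    (hAB : (A = {i | (f i).Vertical} ∧ B = {i | (f i).Horizontal}) ∨
           (A = {i | (f i).Horizontal} ∧ B = {i | (f i).Vertical}))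
    (hconn : (gridGraph f).Connected)
    (hdom : domNum (gridGraph f) = A.ncard) :
    ∀ b ∈ B,
      {u : ι | (gridGraph f).Adj b u ∧
          ((gridGraph f).neighborSet u).ncard ≠ 1 ∧
          ¬ ∃ w, (gridGraph f).Adj u w ∧ ((gridGraph f).neighborSet w).ncard = 1}.ncard
        ≤ 4 := by
  intro b hb
  suffices h : {u | (gridGraph f).Adj b u ∧
      ¬ ∃ w, (gridGraph f).Adj u w ∧ ((gridGraph f).neighborSet w).ncard = 1}.ncard ≤ 4 from
    h.trans' (Set.ncard_le_ncard fun u hu => ⟨hu.1, hu.2.2⟩)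
  rcases hAB with ⟨rfl, rfl⟩ | ⟨rfl, rfl⟩
  · exact hgrid.ncard_nonsupport_neighborSet_le_four hconn hdom hb
  · rw [← gridGraph_swap f] at hconn hdom ⊢
    exact hgrid.swap.ncard_nonsupport_neighborSet_le_four hconn hdom hb

theorem grid_nonleaf_nonsupport_neighbors_le_four {ι : Type} [Fintype ι] [DecidableEq ι]
    (f : ι → GridSeg) (hgrid : IsGrid f) (A B : Set ι)
    (hAB : (A = {i | (f i).Vertical} ∧ B = {i | (f i).Horizontal}) ∨
           (A = {i | (f i).Horizontal} ∧ B = {i | (f i).Vertical}))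
    (hconn : (gridGraph f).Connected)
    (hA : 1 ≤ A.ncard) (hcard : A.ncard ≤ B.ncard)
    (hdom : domNum (gridGraph f) = A.ncard) :
    ∀ b ∈ B,
      {u : ι | (gridGraph f).Adj b u ∧
          ((gridGraph f).neighborSet u).ncard ≠ 1 ∧
          ¬ ∃ w, (gridGraph f).Adj u w ∧ ((gridGraph f).neighborSet w).ncard = 1}.ncard
        ≤ 4 :=
  grid_nonleaf_nonsupport_neighbors_le_four_general f hgrid A B hAB hconn hdom
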